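/- arXiv:2311.16000 — 3 statements merged into one kernel-verified Lean document; each statement's English description precedes it below -/
import Mathlib

section
/- Let n ∈ {2,3}. For all real ρ and all real σ > 0, the function iₙ(ρ,σ) = (n/(2σ^(2/n)))·(ρ² + σ²/(1−n)) is a first integral of the degenerate NPR system: its derivative along the flow vanishes, i.e. (∂iₙ/∂ρ)(ρ,σ)·(ρ² + σ²) + (∂iₙ/∂σ)(ρ,σ)·(nρσ) = 0, where σ^(2/n) denotes the real power of the positive number σ. -/
/-!
Along the flow `ρ' = ρ² + σ²`, `σ' = nρσ`, the quadratic factor `Q = ρ² + σ²/(1 - n)` satisfies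
`Q' = 2ρQ`, while the prefactor `σ^(-2/n)` has logarithmic derivative `-2ρ`; the two cancel.
-/

noncomputable section

open Real

def nprIntegral (n ρ σ : ℝ) : ℝ :=
  n / (2 * σ ^ ((2 : ℝ) / n)) * (ρ ^ 2 + σ ^ 2 / (1 - n))

theorem hasDerivAt_nprIntegral_fst (n ρ σ : ℝ) :
    HasDerivAt (fun ρ' => nprIntegral n ρ' σ) (n * ρ / σ ^ ((2 : ℝ) / n)) ρ := by
  have h := ((hasDerivAt_pow 2 ρ).add_const (σ ^ 2 / (1 - n))).const_mul
    (n / (2 * σ ^ ((2 : ℝ) / n)))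
  refine h.congr_deriv ?_
  push_cast
  ring

theorem hasDerivAt_nprIntegral_snd {n : ℝ} (hn : n ≠ 0) (ρ : ℝ) {σ : ℝ} (hσ : 0 < σ) :
    HasDerivAt (fun σ' => nprIntegral n ρ σ')
      ((n * σ / (1 - n) - (ρ ^ 2 + σ ^ 2 / (1 - n)) / σ) / σ ^ ((2 : ℝ) / n)) σ := by
  set a : ℝ := 2 / n with ha
  have hpow : σ ^ a ≠ 0 := (rpow_pos_of_pos hσ a).ne'
  have hden : HasDerivAt (fun σ' => 2 * σ' ^ a) (2 * (a * σ ^ (a - 1))) σ :=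
    (hasDerivAt_rpow_const (Or.inl hσ.ne')).const_mul 2
  have hquad : HasDerivAt (fun σ' => ρ ^ 2 + σ' ^ 2 / (1 - n)) (2 * σ / (1 - n)) σ := by
    simpa [mul_div_assoc] using ((hasDerivAt_pow 2 σ).div_const (1 - n)).const_add (ρ ^ 2)
  refine (((hasDerivAt_const σ n).div hden (by simpa using hpow)).mul hquad).congr_deriv ?_
  have hna : n * a = 2 := by rw [ha]; field_simp
  rw [Pi.div_apply, rpow_sub hσ, rpow_one]
  field_simp
  linear_combination (-(σ ^ 2 / (1 - n)) - ρ ^ 2) * hna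

theorem nprIntegral_isFirstIntegral {n : ℝ} (hn₀ : n ≠ 0) (hn₁ : n ≠ 1) (ρ : ℝ) {σ : ℝ}
    (hσ : 0 < σ) :
    deriv (fun ρ' => nprIntegral n ρ' σ) ρ * (ρ ^ 2 + σ ^ 2) +
      deriv (fun σ' => nprIntegral n ρ σ') σ * (n * ρ * σ) = 0 := by
  rw [(hasDerivAt_nprIntegral_fst n ρ σ).deriv, (hasDerivAt_nprIntegral_snd hn₀ ρ hσ).deriv]
  have h1n : 1 - n ≠ 0 := sub_ne_zero.mpr hn₁.symm
  field_simp
  ring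

end

/-- The function `iₙ(ρ,σ) = (n/(2σ^(2/n)))(ρ² + σ²/(1−n))` is a first integral
of the degenerate NPR system `F₀(ρ,σ) = (ρ² + σ², nρσ)` for `σ > 0`: its
derivative along the flow vanishes. -/
theorem stmt11 (n : ℝ) (hn : n = 2 ∨ n = 3) (ρ σ : ℝ) (hσ : 0 < σ) :
    deriv (fun ρ' : ℝ => n / (2 * σ ^ ((2 : ℝ) / n)) * (ρ' ^ 2 + σ ^ 2 / (1 - n))) ρ *
      (ρ ^ 2 + σ ^ 2) +
    deriv (fun σ' : ℝ => n / (2 * σ' ^ ((2 : ℝ) / n)) * (ρ ^ 2 + σ' ^ 2 / (1 - n))) σ *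
      (n * ρ * σ) = 0 := by
  have hn₀ : n ≠ 0 := by rcases hn with rfl | rfl <;> norm_num
  have hn₁ : n ≠ 1 := by rcases hn with rfl | rfl <;> norm_num
  exact nprIntegral_isFirstIntegral hn₀ hn₁ ρ hσ
end

section
/- Let n ∈ {2,3}. For all real ρ and all real ω > 0, the function iₙ(ρ,ω) = (n/(2ω^(2/n)))·(ω²/(n−1) + ρ²) is a first integral of the degenerate convergence-vorticity system: (∂iₙ/∂ρ)(ρ,ω)·(ρ² − ω²) + (∂iₙ/∂ω)(ρ,ω)·(nρω) = 0, where ω^(2/n) denotes the real power of the positive number ω. -/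
/-! `∂ρ iₙ = n ρ / ω^(2/n)` and `∂ω iₙ = (ω² − ρ²) / (ω · ω^(2/n))`: the exponent `2/n` is
exactly what makes the `ω²/(n − 1)` terms cancel in `∂ω iₙ`. Weighted by the components of `G₀`,
the two partials then contribute `± n ρ (ρ² − ω²) / ω^(2/n)`. -/

namespace DegenerateCV

theorem hasDerivAt_firstIntegral_rho (n ρ ω : ℝ) :
    HasDerivAt (fun ρ' : ℝ => n / (2 * ω ^ ((2 : ℝ) / n)) * (ω ^ 2 / (n - 1) + ρ' ^ 2))
      (n * ρ / ω ^ ((2 : ℝ) / n)) ρ := by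
  refine (((hasDerivAt_pow 2 ρ).const_add (ω ^ 2 / (n - 1))).const_mul
    (n / (2 * ω ^ ((2 : ℝ) / n)))).congr_deriv ?_
  push_cast
  ring

theorem hasDerivAt_firstIntegral_omega {n : ℝ} (hn₀ : n ≠ 0) (hn₁ : n ≠ 1) (ρ : ℝ) {ω : ℝ}
    (hω : 0 < ω) :
    HasDerivAt (fun ω' : ℝ => n / (2 * ω' ^ ((2 : ℝ) / n)) * (ω' ^ 2 / (n - 1) + ρ ^ 2))
      ((ω ^ 2 - ρ ^ 2) / (ω * ω ^ ((2 : ℝ) / n))) ω := by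
  have hpow : HasDerivAt (fun ω' : ℝ => ω' ^ ((2 : ℝ) / n))
      ((2 / n) * (ω ^ ((2 : ℝ) / n) / ω)) ω := by
    simpa [Real.rpow_sub hω] using Real.hasDerivAt_rpow_const (p := 2 / n) (Or.inl hω.ne')
  have hquad : HasDerivAt (fun ω' : ℝ => ω' ^ 2 / (n - 1) + ρ ^ 2) (2 * ω / (n - 1)) ω := by
    simpa using ((hasDerivAt_pow 2 ω).div_const (n - 1)).add_const (ρ ^ 2)
  refine (((hasDerivAt_const ω n).fun_div (hpow.const_mul 2) (by positivity)).fun_mul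
    hquad).congr_deriv ?_
  have hn₁' : n - 1 ≠ 0 := sub_ne_zero.mpr hn₁
  field_simp
  ring

end DegenerateCV

open DegenerateCV in
/-- The function `iₙ(ρ,ω) = (n/(2ω^(2/n)))(ω²/(n−1) + ρ²)` is a first integral
of the degenerate convergence-vorticity system `G₀(ρ,ω) = (ρ² − ω², nρω)` for
`ω > 0`: its derivative along the flow vanishes. -/
theorem stmt12 (n : ℝ) (hn : n = 2 ∨ n = 3) (ρ ω : ℝ) (hω : 0 < ω) :
    deriv (fun ρ' : ℝ => n / (2 * ω ^ ((2 : ℝ) / n)) * (ω ^ 2 / (n - 1) + ρ' ^ 2)) ρ *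
      (ρ ^ 2 - ω ^ 2) +
    deriv (fun ω' : ℝ => n / (2 * ω' ^ ((2 : ℝ) / n)) * (ω' ^ 2 / (n - 1) + ρ ^ 2)) ω *
      (n * ρ * ω) = 0 := by
  have hn₀ : n ≠ 0 := by rcases hn with rfl | rfl <;> norm_num
  have hn₁ : n ≠ 1 := by rcases hn with rfl | rfl <;> norm_num
  rw [(hasDerivAt_firstIntegral_rho n ρ ω).deriv,
    (hasDerivAt_firstIntegral_omega hn₀ hn₁ ρ hω).deriv]
  field_simp
  ring
end

section
/- Let J₀ = [[0,1],[0,0]]. There exists a map h : ℝ² → ℝ² whose two components are homogeneous quadratic polynomials in (x,y) (explicitly, h(x,y) = (−(3/8)x², −(3/4)xy)) such that for all (x,y) ∈ ℝ²: Dh(x,y)·(J₀·(x,y)) − J₀·h(x,y) = (0, −(3/4)y²). Hence the quadratic term of the Oppenheimer-Snyder system (ẋ = y, ẏ = −(3/4)y²) is nonresonant and can be completely eliminated by a near-identity change of coordinates, so the Oppenheimer-Snyder normal form has no quadratic terms. -/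
open ContinuousLinearMap

section Homological

variable {𝕜 : Type*} [NontriviallyNormedField 𝕜]

noncomputable def homologicalOperator {E : Type*} [NormedAddCommGroup E] [NormedSpace 𝕜 E]
    (J : E →L[𝕜] E) (h : E → E) (p : E) : E :=
  fderiv 𝕜 h p (J p) - J (h p)

/-- The matrix `J₀ = [[0,1],[0,0]]`. -/
def nilpotentJordanBlock : 𝕜 × 𝕜 →L[𝕜] 𝕜 × 𝕜 :=
  (inl 𝕜 𝕜 𝕜).comp (snd 𝕜 𝕜 𝕜)

@[simp]
lemma nilpotentJordanBlock_apply (p : 𝕜 × 𝕜) : nilpotentJordanBlock p = (p.2, 0) :=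
  rfl

lemma fderiv_const_mul_fst_sq_apply (a : 𝕜) (p v : 𝕜 × 𝕜) :
    fderiv 𝕜 (fun q : 𝕜 × 𝕜 => a * q.1 ^ 2) p v = 2 * a * p.1 * v.1 := by
  rw [((hasFDerivAt_fst.pow 2).const_mul a).fderiv]
  simp only [Nat.add_one_sub_one, pow_one, nsmul_eq_mul, Nat.cast_ofNat, smul_apply, coe_fst',
    smul_eq_mul]
  ring

lemma fderiv_const_mul_fst_mul_snd_apply (b : 𝕜) (p v : 𝕜 × 𝕜) :
    fderiv 𝕜 (fun q : 𝕜 × 𝕜 => b * q.1 * q.2) p v = b * (p.2 * v.1 + p.1 * v.2) := by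
  have hd : HasFDerivAt (fun q : 𝕜 × 𝕜 => b * q.1 * q.2) _ p :=
    ((hasFDerivAt_fst (𝕜 := 𝕜)).const_mul b).mul (hasFDerivAt_snd (𝕜 := 𝕜))
  rw [hd.fderiv]
  simp only [add_apply, smul_apply, coe_snd', smul_eq_mul, coe_fst']
  ring

lemma homologicalOperator_nilpotentJordanBlock_quadratic (a b : 𝕜) (p : 𝕜 × 𝕜) :
    homologicalOperator nilpotentJordanBlock (fun q : 𝕜 × 𝕜 => (a * q.1 ^ 2, b * q.1 * q.2)) p =
      ((2 * a - b) * p.1 * p.2, b * p.2 ^ 2) := by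
  rw [homologicalOperator, DifferentiableAt.fderiv_prodMk (by fun_prop) (by fun_prop),
    prod_apply, fderiv_const_mul_fst_sq_apply, fderiv_const_mul_fst_mul_snd_apply]
  ext
  · simp only [nilpotentJordanBlock_apply, Prod.fst_sub]
    ring
  · simp only [nilpotentJordanBlock_apply, Prod.snd_sub]
    ring

end Homological

/-- The quadratic term of the Oppenheimer-Snyder system is nonresonant for the
Bogdanov-Takens linear part `J₀ = [[0,1],[0,0]]`: the quadratic map
`h(x,y) = (−(3/8)x², −(3/4)xy)` satisfies the homological equation
`Dh(x,y)·(J₀(x,y)) − J₀·h(x,y) = (0, −(3/4)y²)`, so the quadratic term can be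
completely eliminated from the normal form. -/
theorem stmt16 :
    ∃ h : ℝ × ℝ → ℝ × ℝ,
      h = (fun p : ℝ × ℝ => (-(3 / 8) * p.1 ^ 2, -(3 / 4) * p.1 * p.2)) ∧
      ∀ p : ℝ × ℝ,
        fderiv ℝ h p (p.2, 0) - (((h p).2, (0 : ℝ)) : ℝ × ℝ) =
          ((0 : ℝ), -(3 / 4) * p.2 ^ 2) := by
  refine ⟨_, rfl, fun p => ?_⟩
  -- `a = b / 2` cancels the `xy` component.
  have key := homologicalOperator_nilpotentJordanBlock_quadratic (-(3 / 8) : ℝ) (-(3 / 4)) p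
  rw [homologicalOperator, nilpotentJordanBlock_apply, nilpotentJordanBlock_apply] at key
  rw [key]
  norm_num
end
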